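/- arXiv:2009.13510 — 5 statements merged into one kernel-verified Lean document; each statement's English description precedes it below -/
import Mathlib

section
/- Let n ≥ 1 and let Y₁,…,Yₙ, Z, W be random variables, each taking finitely many values on a common finite probability space, such that Y₁,…,Yₙ are mutually conditionally independent given the pair (Z,W). Then ∑_{i=1}^{n} I(Yᵢ;Z|W) ≥ I((Y₁,…,Yₙ);Z|W). -/
open scoped Classical
open Finset

/-- Probability of an event `E` under a weight function `p` on a finite sample space. -/
noncomputable def prEv {Ω : Type*} [Fintype Ω] (p : Ω → ℝ) (E : Ω → Prop) : ℝ :=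
  ∑ ω, if E ω then p ω else 0

/-- Shannon entropy (base 2) of a random variable `X` on a finite probability space,
with the convention `0 · log₂ 0 = 0` (automatic since `Real.logb 2 0 = 0`). -/
noncomputable def ent {Ω S : Type*} [Fintype Ω] [Fintype S] (p : Ω → ℝ) (X : Ω → S) : ℝ :=
  -∑ s : S, prEv p (fun ω => X ω = s) * Real.logb 2 (prEv p (fun ω => X ω = s))

/-- Conditional Shannon entropy `H(X|Y)` (base 2). -/
noncomputable def condEnt {Ω S T : Type*} [Fintype Ω] [Fintype S] [Fintype T]
    (p : Ω → ℝ) (X : Ω → S) (Y : Ω → T) : ℝ :=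
  -∑ s : S, ∑ t : T, prEv p (fun ω => X ω = s ∧ Y ω = t) *
      Real.logb 2 (prEv p (fun ω => X ω = s ∧ Y ω = t) / prEv p (fun ω => Y ω = t))

/-- Mutual information `I(X;Y) = H(X) - H(X|Y)`. -/
noncomputable def mi {Ω S T : Type*} [Fintype Ω] [Fintype S] [Fintype T]
    (p : Ω → ℝ) (X : Ω → S) (Y : Ω → T) : ℝ :=
  ent p X - condEnt p X Y

/-- Conditional mutual information `I(X;Y|Z) = H(X|Z) - H(X|(Y,Z))`. -/
noncomputable def cmi {Ω S T U : Type*} [Fintype Ω] [Fintype S] [Fintype T] [Fintype U]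
    (p : Ω → ℝ) (X : Ω → S) (Y : Ω → T) (Z : Ω → U) : ℝ :=
  condEnt p X Z - condEnt p X (fun ω => (Y ω, Z ω))

/-!
Write `H(X|U) = -∑ ω, p ω · log₂ Pr[X = X ω | U = U ω]`. For a tuple `Y = (Yᵢ)`, the
difference `H(Y|U) - ∑ᵢ H(Yᵢ|U)` is then the `p`-average of `log₂ (∏ᵢ Pr[Yᵢ|U] / Pr[Y|U])`,
which is `≤ 0` by Gibbs' inequality because the product of the conditional marginals has total
mass at most one; under conditional independence given `U` the ratio is `1` and the difference
vanishes. Applying the first fact with `U = W` and the second with `U = (Z, W)`, and subtracting,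
gives the theorem.
-/

open Real

lemma sum_mul_logb_nonpos {ι : Type*} [Fintype ι] {b : ℝ} (hb : 1 < b) {w r : ι → ℝ}
    (hw : ∀ i, 0 ≤ w i) (hr : ∀ i, 0 < w i → 0 < r i) (h : ∑ i, w i * r i ≤ ∑ i, w i) :
    ∑ i, w i * logb b (r i) ≤ 0 := by
  have hlog : 0 < log b := log_pos hb
  have hterm : ∀ i, w i * logb b (r i) ≤ (w i * r i - w i) / log b := by
    intro i
    rcases (hw i).eq_or_lt with h0 | h0
    · simp [← h0]
    calc w i * logb b (r i) = w i * log (r i) / log b := by rw [logb, mul_div_assoc]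
      _ ≤ w i * (r i - 1) / log b := by gcongr; exact log_le_sub_one_of_pos (hr i h0)
      _ = (w i * r i - w i) / log b := by ring
  calc ∑ i, w i * logb b (r i) ≤ ∑ i, (w i * r i - w i) / log b := sum_le_sum fun i _ => hterm i
    _ = (∑ i, w i * r i - ∑ i, w i) / log b := by rw [← sum_div, sum_sub_distrib]
    _ ≤ 0 := div_nonpos_of_nonpos_of_nonneg (sub_nonpos.2 h) hlog.le

lemma mul_div_div_le {a b q : ℝ} (hb : 0 ≤ b) (hq : 0 ≤ q) : a * (q / (a / b)) ≤ q * b := by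
  rcases eq_or_ne a 0 with rfl | ha
  · simpa using mul_nonneg hq hb
  rcases eq_or_ne b 0 with rfl | hb'
  · simp
  field_simp
  rfl

section Probability

variable {Ω : Type*} [Fintype Ω] (p : Ω → ℝ)

lemma prEv_nonneg (hp : ∀ ω, 0 ≤ p ω) (E : Ω → Prop) : 0 ≤ prEv p E :=
  sum_nonneg fun ω _ => by split_ifs <;> simp [hp ω]

lemma le_prEv (hp : ∀ ω, 0 ≤ p ω) {E : Ω → Prop} {ω : Ω} (hω : E ω) : p ω ≤ prEv p E := by
  have := single_le_sum (f := fun ω => if E ω then p ω else 0)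
    (fun ω _ => by split_ifs <;> simp [hp ω]) (mem_univ ω)
  simpa [prEv, hω] using this

lemma sum_prEv_mul {κ : Type*} [Fintype κ] (V : Ω → κ) (g : κ → ℝ) :
    ∑ k, prEv p (fun ω => V ω = k) * g k = ∑ ω, p ω * g (V ω) := by
  simp only [prEv, Finset.sum_mul, ite_mul, zero_mul]
  rw [sum_comm]
  simp

lemma sum_prEv_eq_and {κ : Type*} [Fintype κ] (V : Ω → κ) (E : Ω → Prop) :
    ∑ k, prEv p (fun ω => V ω = k ∧ E ω) = prEv p E := by
  simp only [prEv]
  rw [sum_comm]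
  refine sum_congr rfl fun ω _ => ?_
  by_cases hE : E ω <;> simp [hE]

end Probability

section ConditionalEntropy

variable {Ω A B : Type*} [Fintype Ω] (p : Ω → ℝ)

noncomputable def condPr (X : Ω → A) (U : Ω → B) (ω : Ω) : ℝ :=
  prEv p (fun ω' => X ω' = X ω ∧ U ω' = U ω) / prEv p (fun ω' => U ω' = U ω)

lemma condPr_pos (hp : ∀ ω, 0 ≤ p ω) (X : Ω → A) (U : Ω → B) {ω : Ω} (hω : 0 < p ω) :
    0 < condPr p X U ω :=
  div_pos (hω.trans_le (le_prEv p hp ⟨rfl, rfl⟩)) (hω.trans_le (le_prEv p hp rfl))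

lemma condEnt_eq_neg_sum_mul_logb_condPr [Fintype A] [Fintype B] (X : Ω → A) (U : Ω → B) :
    condEnt p X U = -∑ ω, p ω * logb 2 (condPr p X U ω) := by
  have h := sum_prEv_mul p (fun ω => (X ω, U ω)) fun k =>
    logb 2 (prEv p (fun ω => X ω = k.1 ∧ U ω = k.2) / prEv p (fun ω => U ω = k.2))
  simp only [Prod.ext_iff] at h
  rw [condEnt, ← Fintype.sum_prod_type', h]
  rfl

variable [Fintype B] {ι : Type*} [Fintype ι] [DecidableEq ι] {S : ι → Type*}
  [∀ i, Fintype (S i)]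

lemma sum_mul_prod_condPr_div_condPr_le (hp : ∀ ω, 0 ≤ p ω) (Y : ∀ i, Ω → S i)
    (U : Ω → B) :
    ∑ ω, p ω * ((∏ i, condPr p (Y i) U ω) / condPr p (fun ω i => Y i ω) U ω) ≤ ∑ ω, p ω := by
  calc ∑ ω, p ω * ((∏ i, condPr p (Y i) U ω) / condPr p (fun ω i => Y i ω) U ω)
      = ∑ k : B × (∀ i, S i), prEv p (fun ω => (U ω, fun i => Y i ω) = k) *
          ((∏ i, prEv p (fun ω => Y i ω = k.2 i ∧ U ω = k.1) / prEv p (fun ω => U ω = k.1)) /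
            (prEv p (fun ω => (fun i => Y i ω) = k.2 ∧ U ω = k.1) /
              prEv p (fun ω => U ω = k.1))) := by
        rw [sum_prEv_mul]; rfl
    _ ≤ ∑ k : B × (∀ i, S i),
          (∏ i, prEv p (fun ω => Y i ω = k.2 i ∧ U ω = k.1) / prEv p (fun ω => U ω = k.1)) *
            prEv p (fun ω => U ω = k.1) := by
        refine sum_le_sum fun k _ => ?_
        have hk : prEv p (fun ω => (U ω, fun i => Y i ω) = k) =
            prEv p (fun ω => (fun i => Y i ω) = k.2 ∧ U ω = k.1) := by
          simp only [Prod.ext_iff, and_comm]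
        rw [hk]
        exact mul_div_div_le (prEv_nonneg p hp _)
          (prod_nonneg fun i _ => div_nonneg (prEv_nonneg p hp _) (prEv_nonneg p hp _))
    _ = ∑ u, (∏ i, ∑ s, prEv p (fun ω => Y i ω = s ∧ U ω = u) / prEv p (fun ω => U ω = u)) *
          prEv p (fun ω => U ω = u) := by
        simp only [Fintype.sum_prod_type, ← sum_mul, Fintype.prod_sum]
    _ = ∑ u, prEv p (fun ω => U ω = u) := by
        refine sum_congr rfl fun u _ => ?_
        simp only [← sum_div, sum_prEv_eq_and, prod_const]
        rcases eq_or_ne (prEv p (fun ω => U ω = u)) 0 with h | h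
        · simp [h]
        · simp [div_self h]
    _ = ∑ ω, p ω := by simpa using sum_prEv_mul p U fun _ => 1

lemma condEnt_pi_le_sum (hp : ∀ ω, 0 ≤ p ω) (Y : ∀ i, Ω → S i) (U : Ω → B) :
    condEnt p (fun ω i => Y i ω) U ≤ ∑ i, condEnt p (Y i) U := by
  have hdiff : ∑ ω, p ω * (∑ i, logb 2 (condPr p (Y i) U ω) -
      logb 2 (condPr p (fun ω i => Y i ω) U ω)) ≤ 0 := by
    calc _ = ∑ ω, p ω * logb 2 ((∏ i, condPr p (Y i) U ω) /
            condPr p (fun ω i => Y i ω) U ω) := by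
          refine sum_congr rfl fun ω _ => ?_
          rcases (hp ω).eq_or_lt with h0 | h0
          · simp [← h0]
          rw [logb_div (prod_pos fun i _ => condPr_pos p hp _ _ h0).ne'
            (condPr_pos p hp _ _ h0).ne', logb_prod _ _ fun i _ => (condPr_pos p hp _ _ h0).ne']
      _ ≤ 0 := sum_mul_logb_nonpos one_lt_two hp
          (fun ω h0 => div_pos (prod_pos fun i _ => condPr_pos p hp _ _ h0)
            (condPr_pos p hp _ _ h0))
          (sum_mul_prod_condPr_div_condPr_le p hp Y U)
  simp only [mul_sub, mul_sum, sum_sub_distrib] at hdiff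
  rw [sum_comm] at hdiff
  simp only [condEnt_eq_neg_sum_mul_logb_condPr, sum_neg_distrib]
  linarith

lemma condEnt_pi_eq_sum (hp : ∀ ω, 0 ≤ p ω) (Y : ∀ i, Ω → S i) (U : Ω → B)
    (h : ∀ ω, 0 < p ω → condPr p (fun ω i => Y i ω) U ω = ∏ i, condPr p (Y i) U ω) :
    condEnt p (fun ω i => Y i ω) U = ∑ i, condEnt p (Y i) U := by
  simp only [condEnt_eq_neg_sum_mul_logb_condPr, sum_neg_distrib, neg_inj]
  rw [sum_comm]
  refine sum_congr rfl fun ω _ => ?_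
  rcases (hp ω).eq_or_lt with h0 | h0
  · simp [← h0]
  rw [h ω h0, logb_prod _ _ fun i _ => (condPr_pos p hp _ _ h0).ne', mul_sum]

end ConditionalEntropy

theorem sum_condMutualInfo_ge_of_condIndep_general
    {Ω S T V : Type*} [Fintype Ω] [Fintype S] [Fintype T] [Fintype V]
    (n : ℕ)
    (p : Ω → ℝ) (hp : ∀ ω, 0 ≤ p ω)
    (Y : Fin n → Ω → S) (Z : Ω → T) (W : Ω → V)
    (hci : ∀ (y : Fin n → S) (z : T) (w : V),
      0 < prEv p (fun ω => Z ω = z ∧ W ω = w) →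
      prEv p (fun ω => (∀ i, Y i ω = y i) ∧ (Z ω = z ∧ W ω = w)) /
          prEv p (fun ω => Z ω = z ∧ W ω = w) =
        ∏ i, (prEv p (fun ω => Y i ω = y i ∧ (Z ω = z ∧ W ω = w)) /
          prEv p (fun ω => Z ω = z ∧ W ω = w))) :
    ∑ i, cmi p (Y i) Z W ≥ cmi p (fun ω => fun i => Y i ω) Z W := by
  have hindep : ∀ ω, 0 < p ω → condPr p (fun ω i => Y i ω) (fun ω => (Z ω, W ω)) ω =
      ∏ i, condPr p (Y i) (fun ω => (Z ω, W ω)) ω := fun ω hω => by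
    simpa [condPr, Prod.ext_iff, funext_iff] using
      hci (fun i => Y i ω) (Z ω) (W ω) (hω.trans_le (le_prEv p hp ⟨rfl, rfl⟩))
  have hle := condEnt_pi_le_sum p hp Y W
  have heq := condEnt_pi_eq_sum p hp Y _ hindep
  simp only [cmi, ge_iff_le, sum_sub_distrib]
  linarith

/-- If `Y₁,…,Yₙ` are mutually conditionally independent given `(Z,W)`, then
`∑ᵢ I(Yᵢ;Z|W) ≥ I((Y₁,…,Yₙ);Z|W)`. -/
theorem sum_condMutualInfo_ge_of_condIndep
    {Ω S T V : Type*} [Fintype Ω] [Fintype S] [Fintype T] [Fintype V]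
    (n : ℕ) (hn : 1 ≤ n)
    (p : Ω → ℝ) (hp : ∀ ω, 0 ≤ p ω) (hsum : ∑ ω, p ω = 1)
    (Y : Fin n → Ω → S) (Z : Ω → T) (W : Ω → V)
    (hci : ∀ (y : Fin n → S) (z : T) (w : V),
      0 < prEv p (fun ω => Z ω = z ∧ W ω = w) →
      prEv p (fun ω => (∀ i, Y i ω = y i) ∧ (Z ω = z ∧ W ω = w)) /
          prEv p (fun ω => Z ω = z ∧ W ω = w) =
        ∏ i, (prEv p (fun ω => Y i ω = y i ∧ (Z ω = z ∧ W ω = w)) /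
          prEv p (fun ω => Z ω = z ∧ W ω = w))) :
    ∑ i, cmi p (Y i) Z W ≥ cmi p (fun ω => fun i => Y i ω) Z W :=
  sum_condMutualInfo_ge_of_condIndep_general n p hp Y Z W hci
end

section
/- Let P, P', Q', Q be probability measures on a common measurable space, let ε ≥ 0 and δ, δ' ≥ 0. If P ≈_{0,δ'} P', P' ≈_{ε,δ} Q', and Q' ≈_{0,δ'} Q, then P ≈_{ε, (e^ε+1)·δ' + δ} Q. -/
open MeasureTheory ProbabilityTheory

/-- `(ε,δ)`-closeness of two measures: for every measurable event `T`,
`P(T) ≤ e^ε·Q(T) + δ` and `Q(T) ≤ e^ε·P(T) + δ`. -/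
def DPClose {α : Type*} [MeasurableSpace α] (ε δ : ℝ) (P Q : Measure α) : Prop :=
  ∀ T : Set α, MeasurableSet T →
    (P T).toReal ≤ Real.exp ε * (Q T).toReal + δ ∧
    (Q T).toReal ≤ Real.exp ε * (P T).toReal + δ

namespace DPClose

variable {α : Type*} [MeasurableSpace α] {ε δ δ' : ℝ} {P P' Q' Q : Measure α}

theorem symm (h : DPClose ε δ P Q) : DPClose ε δ Q P :=
  fun T hT => (h T hT).symm

theorem le_add_of_exp_zero (h : DPClose 0 δ P Q) {T : Set α} (hT : MeasurableSet T) :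
    (P T).toReal ≤ (Q T).toReal + δ := by
  simpa only [Real.exp_zero, one_mul] using (h T hT).1

theorem le_of_sandwich (h1 : DPClose 0 δ' P P') (h2 : DPClose ε δ P' Q')
    (h3 : DPClose 0 δ' Q' Q) {T : Set α} (hT : MeasurableSet T) :
    (P T).toReal ≤ Real.exp ε * (Q T).toReal + ((Real.exp ε + 1) * δ' + δ) :=
  calc (P T).toReal ≤ (P' T).toReal + δ' := h1.le_add_of_exp_zero hT
    _ ≤ Real.exp ε * (Q' T).toReal + δ + δ' := by gcongr; exact (h2 T hT).1
    _ ≤ Real.exp ε * ((Q T).toReal + δ') + δ + δ' := by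
        gcongr; exact h3.le_add_of_exp_zero hT
    _ = Real.exp ε * (Q T).toReal + ((Real.exp ε + 1) * δ' + δ) := by ring

end DPClose

theorem dpClose_sandwich_general {α : Type*} [MeasurableSpace α]
    (P P' Q' Q : Measure α)
    (ε δ δ' : ℝ)
    (h1 : DPClose 0 δ' P P') (h2 : DPClose ε δ P' Q') (h3 : DPClose 0 δ' Q' Q) :
    DPClose ε ((Real.exp ε + 1) * δ' + δ) P Q :=
  fun _ hT => ⟨h1.le_of_sandwich h2 h3 hT, h3.symm.le_of_sandwich h2.symm h1.symm hT⟩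

/-- If `P ≈_{0,δ'} P'`, `P' ≈_{ε,δ} Q'` and `Q' ≈_{0,δ'} Q`, then
`P ≈_{ε,(e^ε+1)·δ'+δ} Q`. -/
theorem dpClose_sandwich {α : Type*} [MeasurableSpace α]
    (P P' Q' Q : Measure α)
    [IsProbabilityMeasure P] [IsProbabilityMeasure P']
    [IsProbabilityMeasure Q'] [IsProbabilityMeasure Q]
    (ε δ δ' : ℝ) (hε : 0 ≤ ε) (hδ : 0 ≤ δ) (hδ' : 0 ≤ δ')
    (h1 : DPClose 0 δ' P P') (h2 : DPClose ε δ P' Q') (h3 : DPClose 0 δ' Q' Q) :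
    DPClose ε ((Real.exp ε + 1) * δ' + δ) P Q :=
  dpClose_sandwich_general P P' Q' Q ε δ δ' h1 h2 h3
end

section
/- Let μ, ν be probability measures on a measurable space α with μ ≈_{ε,δ} ν, and let κ be a Markov kernel from α to a measurable space β. Then the measures obtained by post-processing, μ.bind(κ) and ν.bind(κ) (i.e., the measures T ↦ ∫ κ(a)(T) dμ(a) and T ↦ ∫ κ(a)(T) dν(a)), satisfy μ.bind(κ) ≈_{ε,δ} ν.bind(κ). -/
/-!
Post-processing a measure `μ` by a Markov kernel `κ` gives `(μ.bind κ) T = ∫ κ(a)(T) dμ(a)`, the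
`μ`-integral of a `[0, 1]`-valued function `f`. By the layer cake formula this is
`∫₀¹ μ {f > t} dt`, so the hypothesis `μ S ≤ e^ε ν S + δ`, applied to each superlevel set
`S = {f > t}` and integrated over `t ∈ (0, 1]`, yields `(μ.bind κ) T ≤ e^ε (ν.bind κ) T + δ`.
-/

open MeasureTheory ProbabilityTheory Set
open scoped ENNReal

lemma ENNReal.toReal_le_mul_add_iff {a b : ℝ≥0∞} (ha : a ≠ ∞) (hb : b ≠ ∞) {c d : ℝ}
    (hc : 0 ≤ c) (hd : 0 ≤ d) :
    a.toReal ≤ c * b.toReal + d ↔ a ≤ ENNReal.ofReal c * b + ENNReal.ofReal d := by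
  have hfin : ENNReal.ofReal c * b ≠ ∞ := ENNReal.mul_ne_top ENNReal.ofReal_ne_top hb
  rw [← ENNReal.toReal_le_toReal ha (ENNReal.add_ne_top.2 ⟨hfin, ENNReal.ofReal_ne_top⟩),
    ENNReal.toReal_add hfin ENNReal.ofReal_ne_top, ENNReal.toReal_mul,
    ENNReal.toReal_ofReal hc, ENNReal.toReal_ofReal hd]

namespace MeasureTheory

variable {α β : Type*} [MeasurableSpace α] [MeasurableSpace β]

lemma lintegral_ofReal_eq_setLIntegral_Ioc_meas_lt (μ : Measure α) {f : α → ℝ}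
    (hf : Measurable f) (hf_nonneg : 0 ≤ f) (hf_le_one : f ≤ 1) :
    ∫⁻ a, ENNReal.ofReal (f a) ∂μ = ∫⁻ t in Ioc 0 1, μ {a | t < f a} := by
  have h_empty : ∀ t ∈ Ioi (1 : ℝ), μ {a | t < f a} = 0 := fun t ht => by
    rw [show {a | t < f a} = ∅ from eq_empty_of_forall_notMem fun a (ha : t < f a) =>
      ((hf_le_one a).trans_lt ht).not_gt ha, measure_empty]
  rw [lintegral_eq_lintegral_meas_lt μ (.of_forall hf_nonneg) hf.aemeasurable,
    ← Ioc_union_Ioi_eq_Ioi zero_le_one, lintegral_union measurableSet_Ioi Ioc_disjoint_Ioi_same,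
    setLIntegral_congr_fun measurableSet_Ioi h_empty, lintegral_zero, add_zero]

lemma lintegral_ofReal_le_mul_add_of_forall_measure_le {μ ν : Measure α} {c d : ℝ≥0∞}
    (h : ∀ S, MeasurableSet S → μ S ≤ c * ν S + d) {f : α → ℝ}
    (hf : Measurable f) (hf_nonneg : 0 ≤ f) (hf_le_one : f ≤ 1) :
    ∫⁻ a, ENNReal.ofReal (f a) ∂μ ≤ c * ∫⁻ a, ENNReal.ofReal (f a) ∂ν + d := by
  have h_anti : Antitone fun t : ℝ => ν {a | t < f a} := fun s t hst =>
    measure_mono fun a (ha : t < f a) => hst.trans_lt ha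
  simp only [lintegral_ofReal_eq_setLIntegral_Ioc_meas_lt _ hf hf_nonneg hf_le_one]
  calc ∫⁻ t in Ioc 0 1, μ {a | t < f a}
      ≤ ∫⁻ t in Ioc 0 1, (c * ν {a | t < f a} + d) :=
        lintegral_mono fun t => h _ (measurableSet_lt measurable_const hf)
    _ = c * (∫⁻ t in Ioc 0 1, ν {a | t < f a}) + d := by
        rw [lintegral_add_right _ measurable_const, lintegral_const_mul _ h_anti.measurable,
          setLIntegral_const, Real.volume_Ioc, sub_zero, ENNReal.ofReal_one, mul_one]

lemma Measure.bind_apply_le_mul_add_of_forall_measure_le {μ ν : Measure α} {c d : ℝ≥0∞}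
    (h : ∀ S, MeasurableSet S → μ S ≤ c * ν S + d) (κ : Kernel α β) [IsMarkovKernel κ]
    {T : Set β} (hT : MeasurableSet T) :
    (μ.bind κ) T ≤ c * (ν.bind κ) T + d := by
  have h_lintegral := lintegral_ofReal_le_mul_add_of_forall_measure_le h
    (κ.measurable_coe hT).ennreal_toReal (fun _ => ENNReal.toReal_nonneg)
    (fun _ => ENNReal.toReal_le_of_le_ofReal zero_le_one (by simpa using prob_le_one))
  simpa only [Measure.bind_apply hT κ.aemeasurable, ENNReal.ofReal_toReal (measure_ne_top _ _)]
    using h_lintegral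

lemma Measure.bind_apply_toReal_le_mul_add {μ ν : Measure α} [IsFiniteMeasure μ]
    [IsFiniteMeasure ν] {c d : ℝ} (hc : 0 ≤ c) (hd : 0 ≤ d)
    (h : ∀ S, MeasurableSet S → (μ S).toReal ≤ c * (ν S).toReal + d)
    (κ : Kernel α β) [IsMarkovKernel κ] {T : Set β} (hT : MeasurableSet T) :
    ((μ.bind κ) T).toReal ≤ c * ((ν.bind κ) T).toReal + d := by
  rw [ENNReal.toReal_le_mul_add_iff (measure_ne_top _ _) (measure_ne_top _ _) hc hd]
  exact bind_apply_le_mul_add_of_forall_measure_le (fun S hS =>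
    (ENNReal.toReal_le_mul_add_iff (measure_ne_top _ _) (measure_ne_top _ _) hc hd).1 (h S hS))
    κ hT

end MeasureTheory

theorem dpClose_postprocess_general {α β : Type*} [MeasurableSpace α] [MeasurableSpace β]
    (μ ν : Measure α) [IsProbabilityMeasure μ] [IsProbabilityMeasure ν]
    (ε δ : ℝ) (hδ : 0 ≤ δ)
    (h : DPClose ε δ μ ν)
    (κ : Kernel α β) [IsMarkovKernel κ] :
    DPClose ε δ (μ.bind fun a => κ a) (ν.bind fun a => κ a) := fun _ hT =>
  ⟨Measure.bind_apply_toReal_le_mul_add (Real.exp_nonneg ε) hδ (fun S hS => (h S hS).1) κ hT,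
    Measure.bind_apply_toReal_le_mul_add (Real.exp_nonneg ε) hδ (fun S hS => (h S hS).2) κ hT⟩

/-- `(ε,δ)`-closeness is preserved under post-processing by a
Markov kernel: if `μ ≈_{ε,δ} ν` then `μ.bind κ ≈_{ε,δ} ν.bind κ`. -/
theorem dpClose_postprocess {α β : Type*} [MeasurableSpace α] [MeasurableSpace β]
    (μ ν : Measure α) [IsProbabilityMeasure μ] [IsProbabilityMeasure ν]
    (ε δ : ℝ) (hε : 0 ≤ ε) (hδ : 0 ≤ δ)
    (h : DPClose ε δ μ ν)
    (κ : Kernel α β) [IsMarkovKernel κ] :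
    DPClose ε δ (μ.bind fun a => κ a) (ν.bind fun a => κ a) :=
  dpClose_postprocess_general μ ν ε δ hδ h κ
end

section
/- Let μ, ν be probability measures on a measurable space α with μ ≈_{ε₁,δ₁} ν, and let κ, λ be Markov kernels from α to a measurable space β such that κ(a) ≈_{ε₂,δ₂} λ(a) for every a ∈ α. Then the joint measures μ ⊗ κ and ν ⊗ λ on α × β (given by (μ ⊗ κ)(T) = ∫ κ(a)({b : (a,b) ∈ T}) dμ(a), and analogously for ν ⊗ λ) satisfy μ ⊗ κ ≈_{ε₁+ε₂, δ₁+δ₂} ν ⊗ λ. -/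
open MeasureTheory ProbabilityTheory

/-!
Write `(μ ⊗ κ)(T) = ∫ f dμ` and `(ν ⊗ ξ)(T) = ∫ g dν` with `f a = κ a (T_a)` and
`g a = ξ a (T_a)`. The pointwise bound `f ≤ e^ε₂ g + δ₂` is split off as `f ≤ h + δ₂` with the
`[0,1]`-valued function `h = min f (e^ε₂ g) ≤ e^ε₂ g`. By the layer-cake formula, closeness of `μ`
and `ν` on events passes to integrals of `[0,1]`-valued functions, so
`∫ f dμ ≤ ∫ h dμ + δ₂ ≤ e^ε₁ ∫ h dν + δ₁ + δ₂ ≤ e^(ε₁+ε₂) ∫ g dν + δ₁ + δ₂`.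
-/

def DPLe {α : Type*} [MeasurableSpace α] (ε δ : ℝ) (P Q : Measure α) : Prop :=
  ∀ T : Set α, MeasurableSet T → P.real T ≤ Real.exp ε * Q.real T + δ

theorem dpClose_iff_dpLe {α : Type*} [MeasurableSpace α] {ε δ : ℝ} {P Q : Measure α} :
    DPClose ε δ P Q ↔ DPLe ε δ P Q ∧ DPLe ε δ Q P :=
  ⟨fun h => ⟨fun T hT => (h T hT).1, fun T hT => (h T hT).2⟩,
    fun h T hT => ⟨h.1 T hT, h.2 T hT⟩⟩

theorem Measurable.integrable_of_nonneg_of_le_one {α : Type*} [MeasurableSpace α]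
    {μ : Measure α} [IsFiniteMeasure μ] {f : α → ℝ} (hf : Measurable f) (hf₀ : ∀ a, 0 ≤ f a)
    (hf₁ : ∀ a, f a ≤ 1) : Integrable f μ :=
  .of_bound hf.aestronglyMeasurable 1
    (.of_forall fun a => (Real.norm_of_nonneg (hf₀ a)).trans_le (hf₁ a))

namespace DPLe

open Set

variable {α : Type*} [MeasurableSpace α] {ε δ : ℝ} {P Q : Measure α}

theorem delta_nonneg (h : DPLe ε δ P Q) : 0 ≤ δ := by
  simpa only [measureReal_empty, mul_zero, zero_add] using h ∅ .empty

theorem integral_le [IsFiniteMeasure P] [IsFiniteMeasure Q] (h : DPLe ε δ P Q) {f : α → ℝ}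
    (hf : Measurable f) (hf₀ : ∀ a, 0 ≤ f a) (hf₁ : ∀ a, f a ≤ 1) :
    ∫ a, f a ∂P ≤ Real.exp ε * ∫ a, f a ∂Q + δ := by
  have htail (R : Measure α) [IsFiniteMeasure R] :
      IntegrableOn (fun t => R.real {a | t ≤ f a}) (Ioc 0 1) := by
    have hanti : Antitone fun t => R.real {a | t ≤ f a} := fun s t hst =>
      measureReal_mono fun a ha => hst.trans ha
    exact (hanti.antitoneOn _ |>.integrableOn_isCompact isCompact_Icc).mono_set
      Ioc_subset_Icc_self
  have hδ : IntegrableOn (fun _ => δ) (Ioc (0 : ℝ) 1) := integrableOn_const measure_Ioc_lt_top.ne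
  rw [(hf.integrable_of_nonneg_of_le_one hf₀ hf₁).integral_eq_integral_Ioc_meas_le
      (.of_forall hf₀) (.of_forall hf₁),
    (hf.integrable_of_nonneg_of_le_one hf₀ hf₁).integral_eq_integral_Ioc_meas_le
      (.of_forall hf₀) (.of_forall hf₁)]
  calc ∫ t in Ioc 0 1, P.real {a | t ≤ f a}
      ≤ ∫ t in Ioc 0 1, (Real.exp ε * Q.real {a | t ≤ f a} + δ) :=
        setIntegral_mono_on (htail P) (((htail Q).const_mul _).add hδ) measurableSet_Ioc
          fun t _ => h _ (hf measurableSet_Ici)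
    _ = Real.exp ε * (∫ t in Ioc 0 1, Q.real {a | t ≤ f a}) + δ := by
        rw [integral_add ((htail Q).const_mul _) hδ, integral_const_mul, setIntegral_const]
        simp

end DPLe

section compProd

variable {α β : Type*} [MeasurableSpace α] [MeasurableSpace β]

theorem MeasureTheory.Measure.compProd_real_apply {μ : Measure α} [SFinite μ] {κ : Kernel α β}
    [IsFiniteKernel κ] {T : Set (α × β)} (hT : MeasurableSet T) :
    (μ.compProd κ).real T = ∫ a, (κ a).real (Prod.mk a ⁻¹' T) ∂μ := by
  rw [measureReal_def, Measure.compProd_apply hT, ← integral_toReal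
    (Kernel.measurable_kernel_prodMk_left hT).aemeasurable (.of_forall fun a => measure_lt_top _ _)]
  rfl

theorem ProbabilityTheory.Kernel.integrable_measureReal_prodMk_left {μ : Measure α}
    [IsFiniteMeasure μ] {κ : Kernel α β} [IsFiniteKernel κ] {T : Set (α × β)}
    (hT : MeasurableSet T) : Integrable (fun a => (κ a).real (Prod.mk a ⁻¹' T)) μ :=
  .of_bound (Kernel.measurable_kernel_prodMk_left hT).ennreal_toReal.aestronglyMeasurable
    κ.bound.toReal (.of_forall fun a => by
      rw [Real.norm_of_nonneg measureReal_nonneg]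
      exact ENNReal.toReal_mono κ.bound_ne_top (κ.measure_le_bound a _))

theorem DPLe.compProd {μ ν : Measure α} [IsProbabilityMeasure μ] [IsFiniteMeasure ν]
    {κ ξ : Kernel α β} [IsMarkovKernel κ] [IsFiniteKernel ξ] {ε₁ ε₂ δ₁ δ₂ : ℝ}
    (h₁ : DPLe ε₁ δ₁ μ ν) (h₂ : ∀ a, DPLe ε₂ δ₂ (κ a) (ξ a)) :
    DPLe (ε₁ + ε₂) (δ₁ + δ₂) (μ.compProd κ) (ν.compProd ξ) := by
  intro T hT
  rw [Measure.compProd_real_apply hT, Measure.compProd_real_apply hT]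
  set f := fun a => (κ a).real (Prod.mk a ⁻¹' T)
  set g := fun a => (ξ a).real (Prod.mk a ⁻¹' T)
  set h := fun a => min (f a) (Real.exp ε₂ * g a)
  have hf_meas : Measurable f := (Kernel.measurable_kernel_prodMk_left hT).ennreal_toReal
  have hg_meas : Measurable g := (Kernel.measurable_kernel_prodMk_left hT).ennreal_toReal
  have hh_meas : Measurable h := hf_meas.min (hg_meas.const_mul _)
  have hh₀ a : 0 ≤ h a := le_min measureReal_nonneg (by positivity)
  have hh₁ a : h a ≤ 1 := (min_le_left _ _).trans measureReal_le_one
  have hfh a : f a ≤ h a + δ₂ := by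
    rw [← min_add_add_right]
    exact le_min (le_add_of_nonneg_right (h₂ a).delta_nonneg)
      (h₂ a _ (measurable_prodMk_left hT))
  have hhg a : h a ≤ Real.exp ε₂ * g a := min_le_right _ _
  have hh_int (R : Measure α) [IsFiniteMeasure R] : Integrable h R :=
    hh_meas.integrable_of_nonneg_of_le_one hh₀ hh₁
  calc ∫ a, f a ∂μ ≤ ∫ a, (h a + δ₂) ∂μ :=
        integral_mono (Kernel.integrable_measureReal_prodMk_left hT)
          ((hh_int μ).add (integrable_const δ₂)) hfh
    _ = ∫ a, h a ∂μ + δ₂ := by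
        rw [integral_add (hh_int μ) (integrable_const δ₂), integral_const, probReal_univ,
          one_smul]
    _ ≤ Real.exp ε₁ * ∫ a, h a ∂ν + δ₁ + δ₂ := by
        gcongr
        exact h₁.integral_le hh_meas hh₀ hh₁
    _ ≤ Real.exp ε₁ * (Real.exp ε₂ * ∫ a, g a ∂ν) + δ₁ + δ₂ := by
        gcongr
        rw [← integral_const_mul]
        exact integral_mono (hh_int ν)
          ((Kernel.integrable_measureReal_prodMk_left hT).const_mul _) hhg
    _ = Real.exp (ε₁ + ε₂) * ∫ a, g a ∂ν + (δ₁ + δ₂) := by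
        rw [Real.exp_add]
        ring

end compProd

theorem dpClose_compProd_general {α β : Type*} [MeasurableSpace α] [MeasurableSpace β]
    (μ ν : Measure α) [IsProbabilityMeasure μ] [IsProbabilityMeasure ν]
    (κ ξ : Kernel α β) [IsMarkovKernel κ] [IsMarkovKernel ξ]
    (ε₁ ε₂ δ₁ δ₂ : ℝ)
    (h1 : DPClose ε₁ δ₁ μ ν) (h2 : ∀ a : α, DPClose ε₂ δ₂ (κ a) (ξ a)) :
    DPClose (ε₁ + ε₂) (δ₁ + δ₂) (μ.compProd κ) (ν.compProd ξ) := by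
  rw [dpClose_iff_dpLe] at h1 ⊢
  simp only [dpClose_iff_dpLe, forall_and] at h2
  exact ⟨h1.1.compProd h2.1, h1.2.compProd h2.2⟩

/-- Composition of `(ε,δ)`-closeness: if `μ ≈_{ε₁,δ₁} ν` and
`κ a ≈_{ε₂,δ₂} ξ a` for every `a`, then `μ ⊗ κ ≈_{ε₁+ε₂,δ₁+δ₂} ν ⊗ ξ`. -/
theorem dpClose_compProd {α β : Type*} [MeasurableSpace α] [MeasurableSpace β]
    (μ ν : Measure α) [IsProbabilityMeasure μ] [IsProbabilityMeasure ν]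
    (κ ξ : Kernel α β) [IsMarkovKernel κ] [IsMarkovKernel ξ]
    (ε₁ ε₂ δ₁ δ₂ : ℝ) (hε₁ : 0 ≤ ε₁) (hε₂ : 0 ≤ ε₂) (hδ₁ : 0 ≤ δ₁) (hδ₂ : 0 ≤ δ₂)
    (h1 : DPClose ε₁ δ₁ μ ν) (h2 : ∀ a : α, DPClose ε₂ δ₂ (κ a) (ξ a)) :
    DPClose (ε₁ + ε₂) (δ₁ + δ₂) (μ.compProd κ) (ν.compProd ξ) :=
  dpClose_compProd_general μ ν κ ξ ε₁ ε₂ δ₁ δ₂ h1 h2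
end

section
/- Let m, n, k be positive integers with m ≤ n and m ≥ 2k. Let X be a random variable taking values in {0,1}^n with Pr[X = x] ≤ 2^{−m} for every x ∈ {0,1}^n. Let ℋ be a finite pairwise independent family of hash functions from {0,1}^n to {0,1}^{m−2k}, let h be uniformly distributed on ℋ and independent of X, and let U be uniformly distributed on {0,1}^{m−2k} and independent of h. Then the statistical distance between the joint distributions of (h(X), h) and (U, h) is at most 2^{−k}. -/
/-!
Write `F_h(y) = Pr[h(X) = y]` and `c = |R|`. Pairwise independence makes two distinct points
collide under a uniform `h` with probability exactly `1/c`, so the collision mass is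
`∑_{h,y} F_h(y)² = |ℋ| (1/c + (1 - 1/c) ∑_x Pr[X = x]²)`, and the squared deviation from
uniform is `∑_{h,y} (F_h(y) - 1/c)² = |ℋ| (1 - 1/c) ∑_x Pr[X = x]² ≤ |ℋ| 2^{-m}`.
Cauchy–Schwarz over the `c |ℋ|` pairs `(h, y)` turns this into the bound `√(c 2^{-m}) = 2^{-k}`
on twice the statistical distance.
-/

open scoped Classical
open Finset

theorem Finset.sum_sq_le_mul_sum_of_le {ι R : Type*} [CommSemiring R] [PartialOrder R]
    [IsOrderedRing R] (s : Finset ι) {p : ι → R} {δ : R}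
    (hpos : ∀ i ∈ s, 0 ≤ p i) (hle : ∀ i ∈ s, p i ≤ δ) :
    ∑ i ∈ s, p i ^ 2 ≤ δ * ∑ i ∈ s, p i := by
  rw [mul_sum]
  exact sum_le_sum fun i hi => by
    rw [sq]
    exact mul_le_mul_of_nonneg_right (hle i hi) (hpos i hi)

section LeftoverHash

variable {H X Y : Type*} [Fintype Y] [DecidableEq Y]

def IsPairwiseIndependent [Fintype H] (eval : H → X → Y) : Prop :=
  ∀ x₁ x₂ : X, x₁ ≠ x₂ → ∀ y₁ y₂ : Y,
    ((univ.filter fun h : H => eval h x₁ = y₁ ∧ eval h x₂ = y₂).card : ℝ) /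
        (Fintype.card H : ℝ) =
      1 / (Fintype.card Y : ℝ) ^ 2

noncomputable def hashPushforward [Fintype X] (eval : H → X → Y) (p : X → ℝ) (h : H)
    (y : Y) : ℝ :=
  ∑ x, if eval h x = y then p x else 0

variable {eval : H → X → Y}

theorem IsPairwiseIndependent.card_collision [Fintype H] [Nonempty H]
    (he : IsPairwiseIndependent eval) {x₁ x₂ : X} (hx : x₁ ≠ x₂) :
    (#{h | eval h x₁ = eval h x₂} : ℝ) = Fintype.card H / Fintype.card Y := by
  have hN : (Fintype.card H : ℝ) ≠ 0 := by positivity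
  have hfiber (y : Y) :
      (#{h | eval h x₁ = eval h x₂ ∧ eval h x₁ = y} : ℝ) =
        Fintype.card H / Fintype.card Y ^ 2 := by
    have hy := he x₁ x₂ hx y y
    rw [div_eq_iff hN] at hy
    have hsame : univ.filter (fun h => eval h x₁ = eval h x₂ ∧ eval h x₁ = y) =
        univ.filter (fun h => eval h x₁ = y ∧ eval h x₂ = y) :=
      filter_congr fun h _ => ⟨fun ⟨h₁₂, h₁⟩ => ⟨h₁, h₁₂.symm.trans h₁⟩,
        fun ⟨h₁, h₂⟩ => ⟨h₁.trans h₂.symm, h₁⟩⟩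
    rw [hsame, hy]
    ring
  rw [card_eq_sum_card_fiberwise (f := fun h => eval h x₁) (t := univ) fun _ _ => mem_univ _]
  push_cast
  simp only [filter_filter, hfiber, sum_const, card_univ, nsmul_eq_mul]
  field_simp

theorem sum_hashPushforward [Fintype X] (p : X → ℝ) (h : H) :
    ∑ y, hashPushforward eval p h y = ∑ x, p x := by
  unfold hashPushforward
  rw [sum_comm]
  simp

theorem sum_sq_hashPushforward [Fintype X] [Fintype H] (p : X → ℝ) :
    ∑ h, ∑ y, hashPushforward eval p h y ^ 2 =
      ∑ x₁, ∑ x₂, p x₁ * p x₂ * #{h | eval h x₁ = eval h x₂} := by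
  have hfiber (h : H) : ∑ y, hashPushforward eval p h y ^ 2 =
      ∑ x₁, p x₁ * hashPushforward eval p h (eval h x₁) := by
    simp_rw [sq]
    conv_lhs => enter [2, y, 1]; unfold hashPushforward
    simp_rw [sum_mul, ite_mul, zero_mul]
    rw [sum_comm]
    simp
  simp only [hfiber]
  simp only [hashPushforward, mul_sum, natCast_card_filter]
  rw [sum_comm]
  refine sum_congr rfl fun x₁ _ => ?_
  rw [sum_comm]
  refine sum_congr rfl fun x₂ _ => ?_
  simp [mul_ite, eq_comm]

theorem IsPairwiseIndependent.sum_sq_hashPushforward_sub [Fintype X] [Fintype H] [Nonempty H]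
    [Nonempty Y]
    (he : IsPairwiseIndependent eval) (p : X → ℝ) (hsum : ∑ x, p x = 1) :
    ∑ h, ∑ y, (hashPushforward eval p h y - 1 / Fintype.card Y) ^ 2 =
      Fintype.card H * (1 - 1 / Fintype.card Y) * ∑ x, p x ^ 2 := by
  set N : ℝ := (Fintype.card H : ℝ)
  set c : ℝ := (Fintype.card Y : ℝ)
  have hc : c ≠ 0 := by positivity
  have hcoll (x₁ x₂ : X) :
      (#{h | eval h x₁ = eval h x₂} : ℝ) = N / c + if x₁ = x₂ then N * (1 - 1 / c) else 0 := by
    by_cases hx : x₁ = x₂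
    · subst hx
      rw [if_pos rfl, filter_true_of_mem fun _ _ => rfl, card_univ]
      ring
    · rw [he.card_collision hx, if_neg hx, add_zero]
  have hsq :
      ∑ h, ∑ y, hashPushforward eval p h y ^ 2 = N / c + N * (1 - 1 / c) * ∑ x, p x ^ 2 := by
    simp_rw [sum_sq_hashPushforward, hcoll, mul_add, sum_add_distrib, mul_ite, mul_zero,
      sum_ite_eq]
    simp only [mem_univ, if_true, ← sum_mul, ← mul_sum, hsum]
    simp only [sq]
    ring
  simp only [sub_sq, sum_add_distrib, sum_sub_distrib, ← sum_mul, ← mul_sum,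
    sum_hashPushforward, hsum, hsq, sum_const, card_univ, nsmul_eq_mul]
  field_simp
  ring

theorem IsPairwiseIndependent.statDist_le [Fintype X] [Fintype H] [Nonempty H]
    [Nonempty Y]
    (he : IsPairwiseIndependent eval) {p : X → ℝ} {δ : ℝ} (hpos : ∀ x, 0 ≤ p x)
    (hsum : ∑ x, p x = 1) (hle : ∀ x, p x ≤ δ) :
    1 / 2 * ∑ y, ∑ h, |hashPushforward eval p h y / Fintype.card H -
        1 / Fintype.card Y * (1 / Fintype.card H)| ≤ √(Fintype.card Y * δ) / 2 := by
  set N : ℝ := (Fintype.card H : ℝ)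
  set c : ℝ := (Fintype.card Y : ℝ)
  have hN : 0 < N := by positivity
  set S := ∑ h, ∑ y, |hashPushforward eval p h y - 1 / c|
  have hvar : ∑ h, ∑ y, (hashPushforward eval p h y - 1 / c) ^ 2 ≤ N * δ :=
    calc _ = N * (1 - 1 / c) * ∑ x, p x ^ 2 := he.sum_sq_hashPushforward_sub p hsum
      _ ≤ N * ∑ x, p x ^ 2 := by
        gcongr
        exact mul_le_of_le_one_right hN.le (sub_le_self 1 (by positivity))
      _ ≤ N * δ := by
        have := univ.sum_sq_le_mul_sum_of_le (fun x _ => hpos x) (fun x _ => hle x)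
        rw [hsum, mul_one] at this
        gcongr
  have hCS : S ^ 2 ≤ N * c * ∑ h, ∑ y, (hashPushforward eval p h y - 1 / c) ^ 2 := by
    simpa [S, N, c, ← Fintype.sum_prod_type', sq_abs] using
      sq_sum_le_card_mul_sum_sq (s := univ)
        (f := fun q : H × Y => |hashPushforward eval p q.1 q.2 - 1 / c|)
  have hscale : ∑ y, ∑ h, |hashPushforward eval p h y / N - 1 / c * (1 / N)| = S / N := by
    rw [sum_comm, sum_div]
    refine sum_congr rfl fun h _ => ?_
    rw [sum_div]
    refine sum_congr rfl fun y _ => ?_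
    rw [← abs_of_pos hN, ← abs_div, abs_of_pos hN]
    ring_nf
  have hsq : (S / N) ^ 2 ≤ c * δ := by
    rw [div_pow, div_le_iff₀ (by positivity)]
    calc S ^ 2 ≤ N * c * (N * δ) := hCS.trans (by gcongr)
      _ = c * δ * N ^ 2 := by ring
  rw [hscale]
  linarith [(le_abs_self (S / N)).trans (Real.abs_le_sqrt hsq)]

end LeftoverHash

theorem leftover_hash_lemma_general (m n k : ℕ)
    (hkm : 2 * k ≤ m)
    (H : Type*) [Fintype H] [Nonempty H]
    (eval : H → (Fin n → Bool) → (Fin (m - 2 * k) → Bool))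
    (hpair : ∀ x₁ x₂ : Fin n → Bool, x₁ ≠ x₂ →
      ∀ y₁ y₂ : Fin (m - 2 * k) → Bool,
        ((univ.filter fun h : H => eval h x₁ = y₁ ∧ eval h x₂ = y₂).card : ℝ) /
            (Fintype.card H : ℝ) =
          1 / ((Fintype.card (Fin (m - 2 * k) → Bool) : ℝ)) ^ 2)
    (pX : (Fin n → Bool) → ℝ) (hpos : ∀ x, 0 ≤ pX x) (hsum : ∑ x, pX x = 1)
    (hbound : ∀ x, pX x ≤ 2 ^ (-(m : ℝ))) :
    (1 / 2) * ∑ y : Fin (m - 2 * k) → Bool, ∑ h : H,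
        |(∑ x : Fin n → Bool, if eval h x = y then pX x else 0) / (Fintype.card H : ℝ) -
          (1 / (Fintype.card (Fin (m - 2 * k) → Bool) : ℝ)) * (1 / (Fintype.card H : ℝ))| ≤
      2 ^ (-(k : ℝ)) := by
  have key := IsPairwiseIndependent.statDist_le (eval := eval) hpair hpos hsum hbound
  have hexp : (Fintype.card (Fin (m - 2 * k) → Bool) : ℝ) * 2 ^ (-(m : ℝ)) =
      (2 ^ (-(k : ℝ))) ^ 2 := by
    obtain ⟨j, rfl⟩ : ∃ j, m = 2 * k + j := ⟨m - 2 * k, by omega⟩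
    simp only [Fintype.card_fun, Fintype.card_bool, Fintype.card_fin, Nat.add_sub_cancel_left,
      Real.rpow_neg zero_le_two, Real.rpow_natCast]
    push_cast
    field_simp
    ring
  rw [hexp, Real.sqrt_sq (by positivity)] at key
  unfold hashPushforward at key
  linarith [show (0 : ℝ) ≤ 2 ^ (-(k : ℝ)) by positivity]

/-- left-over hash lemma: if `X` is a random variable on `{0,1}ⁿ`
with `Pr[X = x] ≤ 2^{−m}` for all `x`, `H` is a pairwise independent family of hash
functions from `{0,1}ⁿ` to `{0,1}^{m−2k}`, `h` is uniform on `H` and independent of `X`,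
and `U` is uniform on `{0,1}^{m−2k}` and independent of `h`, then the statistical
distance between the distributions of `(h(X), h)` and `(U, h)` is at most `2^{−k}`. -/
theorem leftover_hash_lemma (m n k : ℕ) (hm : 1 ≤ m) (hn : 1 ≤ n) (hk : 1 ≤ k)
    (hmn : m ≤ n) (hkm : 2 * k ≤ m)
    (H : Type*) [Fintype H] [Nonempty H]
    (eval : H → (Fin n → Bool) → (Fin (m - 2 * k) → Bool))
    (hpair : ∀ x₁ x₂ : Fin n → Bool, x₁ ≠ x₂ →
      ∀ y₁ y₂ : Fin (m - 2 * k) → Bool,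
        ((univ.filter fun h : H => eval h x₁ = y₁ ∧ eval h x₂ = y₂).card : ℝ) /
            (Fintype.card H : ℝ) =
          1 / ((Fintype.card (Fin (m - 2 * k) → Bool) : ℝ)) ^ 2)
    (pX : (Fin n → Bool) → ℝ) (hpos : ∀ x, 0 ≤ pX x) (hsum : ∑ x, pX x = 1)
    (hbound : ∀ x, pX x ≤ 2 ^ (-(m : ℝ))) :
    (1 / 2) * ∑ y : Fin (m - 2 * k) → Bool, ∑ h : H,
        |(∑ x : Fin n → Bool, if eval h x = y then pX x else 0) / (Fintype.card H : ℝ) -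
          (1 / (Fintype.card (Fin (m - 2 * k) → Bool) : ℝ)) * (1 / (Fintype.card H : ℝ))| ≤
      2 ^ (-(k : ℝ)) :=
  leftover_hash_lemma_general m n k hkm H eval hpair pX hpos hsum hbound
end
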